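/- Let χ ∈ H^s(ℝ²) be a function whose Fourier transform χ̂ satisfies χ̂(ξ) ∈ [0,1] for all ξ, and χ̂(ξ) = 1 on the set (1/2)C̃ where C̃ = {ξ : |ξ₁ - ξ₂| ≤ ε, 1 ≤ |ξ|² ≤ 2}. Define u₀ = (∂₂a₀, -∂₁a₀) with a₀ = ε^{-1/2} log log(1/ε) · χ. Then there is a constant c > 0 independent of ε such that ‖u₀‖_{L²(ℝ²)} ≥ c log log(1/ε), for all sufficiently small ε > 0. -/

import Mathlib

open MeasureTheory Real Filter

noncomputable section

/-- The plane `ℝ²`. -/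
abbrev R2 := EuclideanSpace ℝ (Fin 2)

/-- Fourier transform on `ℝ²`. -/
def FT (f : R2 → ℂ) : R2 → ℂ := FourierTransform.fourier f

/-- Inverse Fourier transform on `ℝ²`. -/
def FTInv (f : R2 → ℂ) : R2 → ℂ := FourierTransformInv.fourierInv f

/-- Partial derivative `∂ᵢ` of a complex-valued function. -/
def pd (i : Fin 2) (f : R2 → ℂ) (x : R2) : ℂ := fderiv ℝ f x (EuclideanSpace.single i 1)

/-- Partial derivative `∂ᵢ` of a real-valued function. -/
def pdR (i : Fin 2) (f : R2 → ℝ) (x : R2) : ℝ := fderiv ℝ f x (EuclideanSpace.single i 1)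

/-- Square of the nonhomogeneous Sobolev `H^τ` norm. -/
def sobolevNormSq (τ : ℝ) (f : R2 → ℂ) : ℝ :=
  ∫ ξ : R2, (1 + ‖ξ‖ ^ 2) ^ τ * ‖FT f ξ‖ ^ 2

/-- The nonhomogeneous Sobolev `H^τ` norm. -/
def sobolevNorm (τ : ℝ) (f : R2 → ℂ) : ℝ := Real.sqrt (sobolevNormSq τ f)

/-- Membership in the Sobolev space `H^τ(ℝ²)`. -/
def InSobolev (τ : ℝ) (f : R2 → ℂ) : Prop :=
  Integrable (fun ξ : R2 => (1 + ‖ξ‖ ^ 2) ^ τ * ‖FT f ξ‖ ^ 2)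

/-- Square of the `L²` norm. -/
def L2NormSq (f : R2 → ℂ) : ℝ := ∫ x : R2, ‖f x‖ ^ 2

/-- The `L²` norm. -/
def L2Norm (f : R2 → ℂ) : ℝ := Real.sqrt (L2NormSq f)

/-- The perpendicular gradient `∇^⊥ a = (∂₂ a, -∂₁ a)`. -/
def gradPerp (a : R2 → ℂ) : Fin 2 → R2 → ℂ := ![fun x => pd 1 a x, fun x => -pd 0 a x]

/-!
By Plancherel, `‖∇^⊥ a‖²_{L²} = (2π)² ∫ ‖ξ‖² ‖â(ξ)‖² dξ` for a Schwartz function `a`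
(the `2π` comes from Mathlib's normalisation `e^{-2πi⟪x, ξ⟫}` of the Fourier transform).
For `a₀ = ε^{-1/2} log log(1/ε) χ` one has `‖â₀‖ = ε^{-1/2} log log(1/ε)` on `(1/2)C̃`,
where also `‖ξ‖ ≥ 1/2`, and `(1/2)C̃` contains a sheared strip of area `ε/40` along the
diagonal. The factor `ε⁻¹` of `‖â₀‖²` is compensated by the area, leaving
`‖u₀‖²_{L²} ≥ π² (log log(1/ε))² / 40`.
-/

open FourierTransform SchwartzMap Set
open scoped LineDeriv

section Schwartz

variable {V : Type*} [NormedAddCommGroup V] [InnerProductSpace ℝ V] [FiniteDimensional ℝ V]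
  [MeasurableSpace V] [BorelSpace V]
  {H : Type*} [NormedAddCommGroup H] [InnerProductSpace ℂ H]

theorem SchwartzMap.integrable_norm_sq (f : 𝓢(V, H)) : Integrable (fun x => ‖f x‖ ^ 2) :=
  (f.memLp 2).integrable_norm_pow two_ne_zero

theorem SchwartzMap.norm_fourier_lineDerivOp_apply [CompleteSpace H] (f : 𝓢(V, H)) (m ξ : V) :
    ‖𝓕 (∂_{m} f) ξ‖ = 2 * π * |inner ℝ ξ m| * ‖𝓕 f ξ‖ := by
  have : (inner ℝ · m).HasTemperateGrowth := ((innerSL ℝ).flip m).hasTemperateGrowth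
  rw [fourier_lineDerivOp_eq, smul_apply, smulLeftCLM_apply_apply this]
  simp [norm_smul, abs_of_pos Real.pi_pos, mul_assoc]

end Schwartz

theorem pd_eq_lineDerivOp (f : 𝓢(R2, ℂ)) (i : Fin 2) :
    pd i f = ⇑(∂_{EuclideanSpace.single i (1 : ℝ)} f : 𝓢(R2, ℂ)) := by
  ext x
  exact (lineDerivOp_apply_eq_fderiv _ f x).symm

theorem L2NormSq_pd (f : 𝓢(R2, ℂ)) (i : Fin 2) :
    L2NormSq (pd i f) = ∫ ξ, ‖𝓕 (∂_{EuclideanSpace.single i (1 : ℝ)} f) ξ‖ ^ 2 := by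
  rw [L2NormSq, pd_eq_lineDerivOp, integral_norm_sq_fourier]

theorem norm_sq_fourier_lineDerivOp_add (f : 𝓢(R2, ℂ)) (ξ : R2) :
    ‖𝓕 (∂_{EuclideanSpace.single (0 : Fin 2) (1 : ℝ)} f) ξ‖ ^ 2
        + ‖𝓕 (∂_{EuclideanSpace.single (1 : Fin 2) (1 : ℝ)} f) ξ‖ ^ 2
      = (2 * π) ^ 2 * ‖ξ‖ ^ 2 * ‖FT f ξ‖ ^ 2 := by
  rw [norm_fourier_lineDerivOp_apply, norm_fourier_lineDerivOp_apply]
  simp only [EuclideanSpace.inner_single_right, RCLike.conj_to_real, EuclideanSpace.norm_sq_eq,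
    Fin.sum_univ_two, FT, fourier_coe, mul_pow, sq_abs, Real.norm_eq_abs]
  ring

theorem sum_L2NormSq_gradPerp (f : 𝓢(R2, ℂ)) :
    ∑ i, L2NormSq (gradPerp f i) = ∫ ξ, (2 * π) ^ 2 * ‖ξ‖ ^ 2 * ‖FT f ξ‖ ^ 2 := by
  have hneg : L2NormSq (fun x => -pd 0 f x) = L2NormSq (pd 0 f) := by simp [L2NormSq]
  rw [Fin.sum_univ_two]
  simp only [gradPerp, Matrix.cons_val_zero, Matrix.cons_val_one]
  rw [hneg, L2NormSq_pd, L2NormSq_pd, add_comm, ← integral_add (integrable_norm_sq _)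
    (integrable_norm_sq _)]
  simp_rw [norm_sq_fourier_lineDerivOp_add]

def shearedStrip (a b d : ℝ) : Set R2 := {x | x 0 ∈ Ioo a b ∧ x 1 ∈ Ioo (x 0) (x 0 + d)}

def Ctilde (ε : ℝ) : Set R2 := {ξ | |ξ 0 - ξ 1| ≤ ε ∧ 1 ≤ ‖ξ‖ ^ 2 ∧ ‖ξ‖ ^ 2 ≤ 2}

theorem shearedStrip_eq_preimage_regionBetween (a b d : ℝ) :
    shearedStrip a b d = (MeasurableEquiv.piFinTwo (fun _ : Fin 2 => ℝ) ∘
      (MeasurableEquiv.toLp 2 (Fin 2 → ℝ)).symm) ⁻¹'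
        regionBetween (fun t => t) (fun t => t + d) (Ioo a b) := by
  ext x
  simp [shearedStrip, regionBetween, MeasurableEquiv.piFinTwo_apply]

theorem measurePreserving_piFinTwo_toLp_symm :
    MeasurePreserving (MeasurableEquiv.piFinTwo (fun _ : Fin 2 => ℝ) ∘
      (MeasurableEquiv.toLp 2 (Fin 2 → ℝ)).symm) :=
  (volume_preserving_piFinTwo _).comp
    (EuclideanSpace.volume_preserving_symm_measurableEquiv_toLp _)

theorem measurableSet_regionBetween_shear (a b d : ℝ) :
    MeasurableSet (regionBetween (fun t : ℝ => t) (fun t => t + d) (Ioo a b)) :=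
  measurableSet_regionBetween measurable_id (measurable_id.add_const d) measurableSet_Ioo

theorem measurableSet_shearedStrip (a b d : ℝ) : MeasurableSet (shearedStrip a b d) := by
  rw [shearedStrip_eq_preimage_regionBetween]
  exact (measurableSet_regionBetween_shear a b d).preimage
    measurePreserving_piFinTwo_toLp_symm.measurable

theorem volume_shearedStrip {a b d : ℝ} (hab : a ≤ b) (hd : 0 ≤ d) :
    volume (shearedStrip a b d) = ENNReal.ofReal ((b - a) * d) := by
  rw [shearedStrip_eq_preimage_regionBetween,
    measurePreserving_piFinTwo_toLp_symm.measure_preimage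
      (measurableSet_regionBetween_shear a b d).nullMeasurableSet, Measure.volume_eq_prod,
    volume_regionBetween_eq_integral (f := fun t => t) (g := fun t => t + d)
      (continuous_id.integrableOn_Icc.mono_set Ioo_subset_Icc_self)
      ((continuous_id.add continuous_const).integrableOn_Icc.mono_set Ioo_subset_Icc_self)
      measurableSet_Ioo (fun x _ => by simpa using hd)]
  simp [Real.volume_real_Ioo_of_le hab]

theorem two_smul_mem_Ctilde {ε : ℝ} (hε : ε < 1 / 10) {ξ : R2}
    (hξ : ξ ∈ shearedStrip (2 / 5) (9 / 20) (ε / 2)) : (2 : ℝ) • ξ ∈ Ctilde ε := by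
  obtain ⟨⟨h0, h0'⟩, h1, h1'⟩ := hξ
  have hnorm : ‖(2 : ℝ) • ξ‖ ^ 2 = 4 * (ξ 0 ^ 2 + ξ 1 ^ 2) := by
    rw [norm_smul, mul_pow, Real.norm_two, EuclideanSpace.norm_sq_eq, Fin.sum_univ_two,
      Real.norm_eq_abs, Real.norm_eq_abs, sq_abs, sq_abs]
    norm_num
  refine ⟨?_, ?_, ?_⟩
  · simp only [PiLp.smul_apply, smul_eq_mul, abs_le]
    constructor <;> linarith
  · rw [hnorm]; nlinarith
  · rw [hnorm]; nlinarith

theorem integrable_norm_sq_mul_norm_FT_sq (f : 𝓢(R2, ℂ)) :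
    Integrable (fun ξ => (2 * π) ^ 2 * ‖ξ‖ ^ 2 * ‖FT f ξ‖ ^ 2) := by
  simp_rw [← norm_sq_fourier_lineDerivOp_add]
  exact (integrable_norm_sq _).add (integrable_norm_sq _)

theorem mul_measureReal_le_sum_L2NormSq_gradPerp (f : 𝓢(R2, ℂ)) {S : Set R2}
    (hS : MeasurableSet S) (hSfin : volume S ≠ ⊤) {M : ℝ}
    (hM : ∀ ξ ∈ S, M ≤ (2 * π) ^ 2 * ‖ξ‖ ^ 2 * ‖FT f ξ‖ ^ 2) :
    M * volume.real S ≤ ∑ i, L2NormSq (gradPerp f i) := by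
  rw [sum_L2NormSq_gradPerp]
  calc M * volume.real S ≤ ∫ ξ in S, (2 * π) ^ 2 * ‖ξ‖ ^ 2 * ‖FT f ξ‖ ^ 2 := by
        simpa [mul_comm] using setIntegral_ge_of_const_le_real hS hSfin hM
          (integrable_norm_sq_mul_norm_FT_sq f).integrableOn
    _ ≤ _ := setIntegral_le_integral (integrable_norm_sq_mul_norm_FT_sq f)
        (Eventually.of_forall fun ξ => by positivity)

theorem pi_sq_mul_sq_le_of_mem_shearedStrip {ε : ℝ} (hε : ε < 1 / 10) (χ : 𝓢(R2, ℂ))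
    (hχ : ∀ ξ, (2 : ℝ) • ξ ∈ Ctilde ε → FT χ ξ = 1) (m : ℝ) :
    ∀ ξ ∈ shearedStrip (2 / 5) (9 / 20) (ε / 2),
      π ^ 2 * m ^ 2 ≤ (2 * π) ^ 2 * ‖ξ‖ ^ 2 * ‖FT ⇑((m : ℂ) • χ) ξ‖ ^ 2 := by
  intro ξ hξ
  have hC := two_smul_mem_Ctilde hε hξ
  have hFT : FT ⇑((m : ℂ) • χ) ξ = m := by
    rw [FT, ← fourier_coe, fourier_smul, smul_apply, fourier_coe, ← FT, hχ ξ hC, smul_eq_mul,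
      mul_one]
  have hξ_norm : 1 ≤ 2 ^ 2 * ‖ξ‖ ^ 2 := by
    simpa [norm_smul, mul_pow] using hC.2.1
  rw [hFT, Complex.norm_real, Real.norm_eq_abs, sq_abs]
  nlinarith [mul_le_mul_of_nonneg_left hξ_norm (sq_nonneg (π * m))]

theorem rpow_neg_one_half_sq {ε : ℝ} (hε : 0 ≤ ε) : (ε ^ (-(1 : ℝ) / 2)) ^ 2 = ε⁻¹ := by
  rw [← rpow_natCast, ← rpow_mul hε]
  norm_num [rpow_neg_one]

theorem one_lt_log_log_inv {ε : ℝ} (hε : 0 < ε) (hε' : ε < exp (-exp 1)) :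
    1 < log (log (1 / ε)) := by
  have h : exp (exp 1) < 1 / ε := by rwa [one_div, lt_inv_comm₀ (exp_pos _) hε, ← exp_neg]
  have h' : exp 1 < log (1 / ε) := (lt_log_iff_exp_lt (by positivity)).2 h
  exact (lt_log_iff_exp_lt ((exp_pos 1).trans h')).2 h'

theorem large_initial_data_general :
    ∃ c > 0, ∃ ε₀ > 0, ∀ ε : ℝ, 0 < ε → ε < ε₀ →
      ∀ χ : SchwartzMap R2 ℂ,
        (∀ ξ : R2, ∃ r : ℝ, 0 ≤ r ∧ r ≤ 1 ∧ FT (⇑χ) ξ = (r : ℂ)) →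
        (∀ ξ : R2, |(2 : ℝ) • ξ 0 - (2 : ℝ) • ξ 1| ≤ ε →
          1 ≤ ‖(2 : ℝ) • ξ‖ ^ 2 → ‖(2 : ℝ) • ξ‖ ^ 2 ≤ 2 → FT (⇑χ) ξ = 1) →
        Real.sqrt (∑ i, L2NormSq
            (gradPerp (fun x => ((ε ^ (-(1 : ℝ) / 2) * Real.log (Real.log (1 / ε)) : ℝ) : ℂ)
              * χ x) i))
          ≥ c * Real.log (Real.log (1 / ε)) := by
  refine ⟨1 / 4, by norm_num, min (1 / 10) (exp (-exp 1)), by positivity, ?_⟩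
  intro ε hε hε₀ χ _ hχ
  set L := log (log (1 / ε))
  set m : ℝ := ε ^ (-(1 : ℝ) / 2) * L
  have hL : 1 < L := one_lt_log_log_inv hε (hε₀.trans_le (min_le_right _ _))
  have hm : m ^ 2 * ε = L ^ 2 := by
    rw [mul_pow, rpow_neg_one_half_sq hε.le]
    field_simp
  have hvol := volume_shearedStrip (a := 2 / 5) (b := 9 / 20) (d := ε / 2) (by norm_num)
    (by positivity)
  have hbound := mul_measureReal_le_sum_L2NormSq_gradPerp ((m : ℂ) • χ)
    (measurableSet_shearedStrip _ _ _) (hvol ▸ ENNReal.ofReal_ne_top)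
    (pi_sq_mul_sq_le_of_mem_shearedStrip (hε₀.trans_le (min_le_left _ _)) χ
      (fun ξ hξ => hχ ξ hξ.1 hξ.2.1 hξ.2.2) m)
  rw [measureReal_def, hvol, ENNReal.toReal_ofReal (by positivity)] at hbound
  refine le_sqrt_of_sq_le ?_
  have hπ : 9 ≤ π ^ 2 := by nlinarith [pi_gt_three]
  calc (1 / 4 * L) ^ 2 ≤ π ^ 2 * L ^ 2 / 40 := by
        nlinarith [mul_le_mul_of_nonneg_right hπ (sq_nonneg L)]
    _ = π ^ 2 * m ^ 2 * ((9 / 20 - 2 / 5) * (ε / 2)) := by rw [← hm]; ring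
    _ ≤ _ := hbound

/-- With `χ` Schwartz, `0 ≤ χ̂ ≤ 1`, `χ̂ = 1` on `(1/2)C̃` where
`C̃ = {ξ : |ξ₁-ξ₂| ≤ ε, 1 ≤ |ξ|² ≤ 2}`, and `u₀ = ∇^⊥(ε^{-1/2} log log(1/ε) χ)`, one has
`‖u₀‖_{L²} ≥ c log log(1/ε)` for a constant `c > 0` independent of `ε`,
for all sufficiently small `ε > 0`. -/
theorem large_initial_data (s : ℝ) (hs : 2 < s) :
    ∃ c > 0, ∃ ε₀ > 0, ∀ ε : ℝ, 0 < ε → ε < ε₀ →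
      ∀ χ : SchwartzMap R2 ℂ,
        (∀ ξ : R2, ∃ r : ℝ, 0 ≤ r ∧ r ≤ 1 ∧ FT (⇑χ) ξ = (r : ℂ)) →
        (∀ ξ : R2, |(2 : ℝ) • ξ 0 - (2 : ℝ) • ξ 1| ≤ ε →
          1 ≤ ‖(2 : ℝ) • ξ‖ ^ 2 → ‖(2 : ℝ) • ξ‖ ^ 2 ≤ 2 → FT (⇑χ) ξ = 1) →
        Real.sqrt (∑ i, L2NormSq
            (gradPerp (fun x => ((ε ^ (-(1 : ℝ) / 2) * Real.log (Real.log (1 / ε)) : ℝ) : ℂ)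
              * χ x) i))
          ≥ c * Real.log (Real.log (1 / ε)) :=
  large_initial_data_general

end
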